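/- Let f be a real-valued Hölder continuous function of exponent α ∈ (0,1) on the unit circle with f(1) = 0, and let T₁ be the Hilbert transform normalized at 1 (so that f + iT₁f extends holomorphically to D and T₁f(1) = 0). Then (1/2π) ∫₀^{2π} (f + iT₁f)(e^{iθ}) dθ = −(1/π) ∫₀^{2π} f(e^{iθ})/(e^{iθ} − 1) dθ. -/

import Mathlib

open Complex Metric intervalIntegral
open scoped NNReal Real

lemma cauchy_interval {F : ℂ → ℂ} (hF : DiffContOnCl ℂ F (ball (0:ℂ) 1))
    {w : ℂ} (hw : w ∈ ball (0:ℂ) 1) :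
    (∫ θ in (0:ℝ)..(2*π), Complex.exp (θ * Complex.I) * F (Complex.exp (θ * Complex.I)) /
      (Complex.exp (θ * Complex.I) - w)) = 2 * π * F w := by
  have h := hF.circleIntegral_sub_inv_smul hw
  rw [circleIntegral] at h
  simp only [deriv_circleMap, smul_eq_mul] at h
  have hc : ∀ θ : ℝ, circleMap 0 1 θ = Complex.exp (θ * Complex.I) := fun θ => by simp [circleMap]
  simp only [hc] at h
  have h2 : (∫ θ in (0:ℝ)..(2*π), Complex.I * (Complex.exp (θ * Complex.I) *
      F (Complex.exp (θ * Complex.I)) / (Complex.exp (θ * Complex.I) - w)))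
      = 2 * π * Complex.I * F w := by
    rw [← h]; apply intervalIntegral.integral_congr; intro θ _; ring
  rw [intervalIntegral.integral_const_mul] at h2
  apply mul_left_cancel₀ Complex.I_ne_zero
  rw [h2]; ring

lemma norm_exp_sub_real_sq (t θ : ℝ) :
    ‖Complex.exp (θ * Complex.I) - (t:ℂ)‖^2 = 1 - 2*t*Real.cos θ + t^2 := by
  rw [Complex.sq_norm, Complex.normSq_apply]
  simp only [Complex.sub_re, Complex.sub_im, Complex.exp_ofReal_mul_I_re,
    Complex.exp_ofReal_mul_I_im, Complex.ofReal_re, Complex.ofReal_im]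
  nlinarith [Real.sin_sq_add_cos_sq θ]

lemma norm_le_sqrt_two_mul {t : ℝ} (ht : 1/2 ≤ t) (ht1 : t ≤ 1) (θ : ℝ) :
    ‖Complex.exp (θ * Complex.I) - 1‖ ≤ Real.sqrt 2 * ‖Complex.exp (θ * Complex.I) - (t:ℂ)‖ := by
  have h1 := norm_exp_sub_real_sq 1 θ
  have h2 := norm_exp_sub_real_sq t θ
  push_cast at h1
  have hc := Real.cos_le_one θ
  have hb : (0:ℝ) ≤ ‖Complex.exp (θ * Complex.I) - (t:ℂ)‖ := norm_nonneg _
  have key : ‖Complex.exp (θ * Complex.I) - 1‖^2 ≤ (Real.sqrt 2 * ‖Complex.exp (θ * Complex.I) - (t:ℂ)‖)^2 := by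
    rw [mul_pow, Real.sq_sqrt (by norm_num : (0:ℝ) ≤ 2)]
    nlinarith [sq_nonneg (t-1)]
  calc ‖Complex.exp (θ * Complex.I) - 1‖
      = Real.sqrt (‖Complex.exp (θ * Complex.I) - 1‖^2) := (Real.sqrt_sq (norm_nonneg _)).symm
    _ ≤ Real.sqrt ((Real.sqrt 2 * ‖Complex.exp (θ * Complex.I) - (t:ℂ)‖)^2) := Real.sqrt_le_sqrt key
    _ = _ := Real.sqrt_sq (by positivity)

lemma jordan_lower {θ : ℝ} (h0 : 0 ≤ θ) (hπ : θ ≤ π) :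
    2/π * θ ≤ ‖Complex.exp (θ * Complex.I) - 1‖ := by
  have h1 := norm_exp_sub_real_sq 1 θ
  push_cast at h1
  have hs : Real.sin (θ/2)^2 = 1/2 - Real.cos θ / 2 := by
    have := Real.sin_sq_eq_half_sub (θ/2)
    rw [show 2*(θ/2) = θ by ring] at this
    linarith
  have hsin : 2/π * (θ/2) ≤ Real.sin (θ/2) :=
    Real.mul_le_sin (by linarith) (by linarith)
  have hpi : (0:ℝ) < π := Real.pi_pos
  have h0' : (0:ℝ) ≤ 2/π * (θ/2) := by positivity
  have hsq : (2/π*(θ/2))^2 ≤ Real.sin (θ/2)^2 := pow_le_pow_left₀ h0' hsin 2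
  have key : (2/π * θ)^2 ≤ ‖Complex.exp (θ * Complex.I) - 1‖^2 := by
    rw [h1]; nlinarith [hsq, hs]
  calc 2/π * θ = Real.sqrt ((2/π*θ)^2) := (Real.sqrt_sq (by positivity)).symm
    _ ≤ Real.sqrt (‖Complex.exp (θ * Complex.I) - 1‖^2) := Real.sqrt_le_sqrt key
    _ = _ := Real.sqrt_sq (norm_nonneg _)

lemma jordan_lower' {θ : ℝ} (hπ : π ≤ θ) (h2 : θ ≤ 2*π) :
    2/π * (2*π - θ) ≤ ‖Complex.exp (θ * Complex.I) - 1‖ := by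
  have h1 := norm_exp_sub_real_sq 1 θ
  have h1' := norm_exp_sub_real_sq 1 (2*π - θ)
  push_cast at h1 h1'
  have hcos : Real.cos (2*π - θ) = Real.cos θ := Real.cos_two_pi_sub θ
  have heq : ‖Complex.exp (↑(2*π-θ) * Complex.I) - 1‖ = ‖Complex.exp (↑θ * Complex.I) - 1‖ := by
    have e1 : ‖Complex.exp (↑(2*π-θ) * Complex.I) - 1‖^2 = ‖Complex.exp (↑θ * Complex.I) - 1‖^2 := by
      push_cast
      rw [h1, h1', hcos]
    have := Real.sqrt_sq (norm_nonneg (Complex.exp (↑(2*π-θ) * Complex.I) - 1))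
    nlinarith [norm_nonneg (Complex.exp (↑(2*π-θ) * Complex.I) - 1),
      norm_nonneg (Complex.exp (↑θ * Complex.I) - 1)]
  have := jordan_lower (θ := 2*π - θ) (by linarith) (by linarith)
  rw [heq] at this
  exact this

lemma holder_dist_le {C β : ℝ≥0} {f : ℂ → ℝ} {s : Set ℂ} (h : HolderOnWith C β f s)
    {x y : ℂ} (hx : x ∈ s) (hy : y ∈ s) : dist (f x) (f y) ≤ C * dist x y ^ (β:ℝ) := by
  have h2 := h.edist_le hx hy
  rw [edist_dist, edist_dist, ENNReal.ofReal_rpow_of_nonneg dist_nonneg β.coe_nonneg,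
    ← ENNReal.ofReal_coe_nnreal, ← ENNReal.ofReal_mul C.coe_nonneg] at h2
  exact (ENNReal.ofReal_le_ofReal_iff (by positivity)).mp h2

lemma intervalIntegral_conj {h : ℝ → ℂ} {a b : ℝ} :
    (∫ x in a..b, (starRingEnd ℂ) (h x)) = (starRingEnd ℂ) (∫ x in a..b, h x) := by
  rw [intervalIntegral_eq_integral_uIoc, intervalIntegral_eq_integral_uIoc, integral_conj]
  split_ifs with hab
  · rw [one_smul, one_smul]
  · rw [neg_one_smul, neg_one_smul, map_neg]

/-- for real Hölder `f` on the unit circle with `f(1)=0`, and `T₁f` its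
Hilbert transform normalized at `1` (i.e. any real Hölder `g` with `g(1)=0` such that
`f + ig` extends holomorphically to the disc),
`(1/2π)∫₀^{2π}(f+iT₁f) dθ = −(1/π)∫₀^{2π} f(σ)/(σ−1) dθ`. -/
theorem stmt_5 (α : ℝ≥0) (hα0 : 0 < α) (hα1 : (α : ℝ) < 1)
    (f g : ℂ → ℝ)
    (hf : ∃ C, HolderOnWith C α f (sphere (0:ℂ) 1)) (hf1 : f 1 = 0)
    (hg : ∃ C, HolderOnWith C α g (sphere (0:ℂ) 1)) (hg1 : g 1 = 0)
    (hext : ∃ F : ℂ → ℂ, ContinuousOn F (closedBall 0 1) ∧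
      DifferentiableOn ℂ F (ball 0 1) ∧
      ∀ σ ∈ sphere (0:ℂ) 1, F σ = (f σ : ℂ) + Complex.I * (g σ : ℂ)) :
    (1 / (2 * π) : ℂ) *
        ∫ θ in (0:ℝ)..(2 * π),
          ((f (Complex.exp (θ * Complex.I)) : ℂ) +
            Complex.I * (g (Complex.exp (θ * Complex.I)) : ℂ)) =
      -(1 / π : ℂ) *
        ∫ θ in (0:ℝ)..(2 * π),
          (f (Complex.exp (θ * Complex.I)) : ℂ) /
            (Complex.exp (θ * Complex.I) - 1) := by
  obtain ⟨Cf, hf'⟩ := hf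
  obtain ⟨Cg, hg'⟩ := hg
  obtain ⟨F, hFc, hFd, hFb⟩ := hext
  have hπ : (0:ℝ) < π := Real.pi_pos
  have h1s : (1:ℂ) ∈ sphere (0:ℂ) 1 := by simp
  have hsph : ∀ θ:ℝ, Complex.exp (θ*Complex.I) ∈ sphere (0:ℂ) 1 := fun θ => by
    simp [mem_sphere_zero_iff_norm]
  have hcball : ∀ θ:ℝ, Complex.exp (θ*Complex.I) ∈ closedBall (0:ℂ) 1 := fun θ =>
    sphere_subset_closedBall (hsph θ)
  have hF1 : F 1 = 0 := by rw [hFb 1 h1s, hf1, hg1]; simp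
  have hDC : DiffContOnCl ℂ F (ball (0:ℂ) 1) := ⟨hFd, by rwa [closure_ball (0:ℂ) one_ne_zero]⟩
  set D : ℝ := (Cf:ℝ) + (Cg:ℝ) with hDdef
  have hD0 : 0 ≤ D := by positivity
  have hFbound : ∀ θ:ℝ, ‖F (Complex.exp (θ*Complex.I))‖ ≤
      D * ‖Complex.exp (θ*Complex.I) - 1‖ ^ (α:ℝ) := by
    intro θ
    set σ := Complex.exp (θ*Complex.I) with hσdef
    rw [hFb σ (hsph θ)]
    have hfd := holder_dist_le hf' (hsph θ) h1s
    have hgd := holder_dist_le hg' (hsph θ) h1s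
    rw [hf1] at hfd
    rw [hg1] at hgd
    rw [Real.dist_eq, sub_zero, dist_eq_norm] at hfd hgd
    calc ‖(f σ:ℂ) + Complex.I * (g σ:ℂ)‖ ≤ ‖(f σ:ℂ)‖ + ‖Complex.I * (g σ:ℂ)‖ := norm_add_le _ _
      _ = |f σ| + |g σ| := by simp
      _ ≤ Cf * ‖σ-1‖^(α:ℝ) + Cg * ‖σ-1‖^(α:ℝ) := add_le_add hfd hgd
      _ = D * ‖σ-1‖^(α:ℝ) := by rw [hDdef]; ring
  set r : ℝ := (α:ℝ) - 1 with hrdef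
  have hα0' : (0:ℝ) < α := hα0
  have hr0 : r ≤ 0 := by rw [hrdef]; linarith
  have hr1 : -1 < r := by rw [hrdef]; linarith
  set bound : ℝ → ℝ := fun θ => Real.sqrt 2 * D * ((2/π*θ)^r + (2/π*(2*π-θ))^r) with hbdef
  have hbint : IntervalIntegrable bound MeasureTheory.volume 0 (2*π) := by
    have i1 : IntervalIntegrable (fun x:ℝ => x ^ r) MeasureTheory.volume 0 4 :=
      intervalIntegrable_rpow' hr1
    have i2 := i1.comp_mul_left (c := 2/π)
    rw [zero_div, show (4:ℝ)/(2/π) = 2*π by field_simp; ring] at i2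
    have i3 := i2.comp_sub_left (2*π)
    rw [sub_zero, sub_self] at i3
    have i4 := (i2.add i3.symm).const_mul (Real.sqrt 2 * D)
    exact i4
  have hbnn : ∀ θ ∈ Set.Ioc (0:ℝ) (2*π), 0 ≤ bound θ := by
    intro θ hθ
    have h1 : (0:ℝ) ≤ 2/π*θ := mul_nonneg (by positivity) hθ.1.le
    have h2 : (0:ℝ) ≤ 2/π*(2*π-θ) := mul_nonneg (by positivity) (by linarith [hθ.2])
    exact mul_nonneg (mul_nonneg (Real.sqrt_nonneg 2) hD0)
      (add_nonneg (Real.rpow_nonneg h1 r) (Real.rpow_nonneg h2 r))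
  have hkey : ∀ t:ℝ, 1/2 ≤ t → t ≤ 1 → ∀ θ ∈ Set.Ioc (0:ℝ) (2*π),
      ‖F (Complex.exp (θ*Complex.I)) / (Complex.exp (θ*Complex.I) - (t:ℂ))‖ ≤ bound θ := by
    intro t ht2 ht1 θ hθ
    set σ := Complex.exp (θ*Complex.I) with hσdef
    obtain ⟨hθ0, hθ2⟩ := hθ
    by_cases hσ1 : σ = 1
    · rw [norm_div, hσ1, hF1, norm_zero, zero_div]
      exact hbnn θ ⟨hθ0, hθ2⟩
    · have hσne : σ - 1 ≠ 0 := sub_ne_zero.mpr hσ1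
      have hn1 : 0 < ‖σ - 1‖ := norm_pos_iff.mpr hσne
      have hden : ‖σ - 1‖ / Real.sqrt 2 ≤ ‖σ - (t:ℂ)‖ := by
        rw [div_le_iff₀ (by positivity)]
        have h := norm_le_sqrt_two_mul ht2 ht1 θ
        rw [← hσdef] at h
        linarith [h]
      have hdenpos : (0:ℝ) < ‖σ - 1‖ / Real.sqrt 2 := by positivity
      rw [norm_div]
      have step1 : ‖F σ‖ / ‖σ - (t:ℂ)‖ ≤ (D * ‖σ-1‖^(α:ℝ)) / (‖σ-1‖ / Real.sqrt 2) :=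
        div_le_div₀ (by positivity) (hFbound θ) hdenpos hden
      have step2 : (D * ‖σ-1‖^(α:ℝ)) / (‖σ-1‖ / Real.sqrt 2) = Real.sqrt 2 * D * ‖σ-1‖^r := by
        rw [hrdef, Real.rpow_sub hn1, Real.rpow_one]
        field_simp
      have hθne : θ ≠ 2*π := by
        intro h
        apply hσ1
        rw [hσdef, h]
        push_cast
        exact Complex.exp_two_pi_mul_I
      have hθlt : θ < 2*π := lt_of_le_of_ne hθ2 hθne
      have step3 : ‖σ-1‖^r ≤ (2/π*θ)^r + (2/π*(2*π-θ))^r := by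
        rcases le_or_gt θ π with hc | hc
        · have hl := jordan_lower (le_of_lt hθ0) hc
          rw [← hσdef] at hl
          have h1 : ‖σ-1‖^r ≤ (2/π*θ)^r :=
            Real.rpow_le_rpow_of_nonpos (mul_pos (by positivity) hθ0) hl hr0
          have h2 : (0:ℝ) ≤ (2/π*(2*π-θ))^r :=
            Real.rpow_nonneg (mul_nonneg (by positivity) (by linarith)) r
          linarith
        · have hl := jordan_lower' (le_of_lt hc) hθ2
          rw [← hσdef] at hl
          have hpos : (0:ℝ) < 2/π*(2*π-θ) := mul_nonneg (by positivity) (by linarith) |>.lt_of_ne ?_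
          swap
          · symm; apply ne_of_gt; exact mul_pos (by positivity) (by linarith)
          have h1 : ‖σ-1‖^r ≤ (2/π*(2*π-θ))^r :=
            Real.rpow_le_rpow_of_nonpos hpos hl hr0
          have h2 : (0:ℝ) ≤ (2/π*θ)^r :=
            Real.rpow_nonneg (mul_nonneg (by positivity) hθ0.le) r
          linarith
      calc ‖F σ‖ / ‖σ - (t:ℂ)‖ ≤ Real.sqrt 2 * D * ‖σ-1‖^r := by rw [← step2]; exact step1
        _ ≤ Real.sqrt 2 * D * ((2/π*θ)^r + (2/π*(2*π-θ))^r) := by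
            apply mul_le_mul_of_nonneg_left step3 (by positivity)
        _ = bound θ := rfl
  -- limit sequence
  set t : ℕ → ℝ := fun n => 1 - 1/(n+2) with htdef
  have ht2 : ∀ n, 1/2 ≤ t n := by
    intro n
    have h1 : (2:ℝ) ≤ (n:ℝ)+2 := by
      have := Nat.cast_nonneg (α := ℝ) n
      linarith
    have : 1/((n:ℝ)+2) ≤ 1/2 := by
      apply div_le_div_of_nonneg_left (by norm_num) (by norm_num) h1
    simp only [htdef]
    linarith
  have ht1 : ∀ n, t n < 1 := by
    intro n
    have h1 : (0:ℝ) < 1/((n:ℝ)+2) := by positivity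
    simp only [htdef]
    linarith
  have ht0 : ∀ n, 0 < t n := fun n => lt_of_lt_of_le (by norm_num) (ht2 n)
  have htlim : Filter.Tendsto t Filter.atTop (nhds 1) := by
    have h2 : Filter.Tendsto (fun n:ℕ => (n:ℝ)+2) Filter.atTop Filter.atTop :=
      Filter.tendsto_atTop_add_const_right _ 2 tendsto_natCast_atTop_atTop
    have h3 : Filter.Tendsto (fun n:ℕ => 1 - 1/((n:ℝ)+2)) Filter.atTop (nhds (1 - 0)) :=
      tendsto_const_nhds.sub (by have h := h2.inv_tendsto_atTop; simp only [one_div]; exact h)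
    rw [htdef]
    simpa using h3
  have htC : Filter.Tendsto (fun n => ((t n:ℝ):ℂ)) Filter.atTop (nhds 1) := by
    have := (Complex.continuous_ofReal.tendsto 1).comp htlim
    simpa [Function.comp_def] using this
  have hmemball : ∀ n, ((t n:ℝ):ℂ) ∈ ball (0:ℂ) 1 := by
    intro n
    rw [mem_ball_zero_iff, Complex.norm_real, Real.norm_eq_abs, abs_of_pos (ht0 n)]
    exact ht1 n
  have hFt : Filter.Tendsto (fun n => F ((t n:ℝ):ℂ)) Filter.atTop (nhds 0) := by
    have hcw : ContinuousWithinAt F (closedBall (0:ℂ) 1) 1 := hFc 1 (by simp)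
    have h1 : Filter.Tendsto (fun n => ((t n:ℝ):ℂ)) Filter.atTop (nhdsWithin 1 (closedBall (0:ℂ) 1)) :=
      tendsto_nhdsWithin_of_tendsto_nhds_of_eventually_within _ htC
        (Filter.Eventually.of_forall (fun n => ball_subset_closedBall (hmemball n)))
    have := hcw.tendsto.comp h1
    rwa [hF1] at this
  -- continuity facts
  have hexpc : Continuous fun θ:ℝ => Complex.exp (θ*Complex.I) :=
    Complex.continuous_exp.comp (Complex.continuous_ofReal.mul continuous_const)
  have hFexp : Continuous fun θ:ℝ => F (Complex.exp (θ*Complex.I)) :=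
    hFc.comp_continuous hexpc hcball
  have hne : ∀ w:ℂ, ‖w‖ < 1 → ∀ θ:ℝ, Complex.exp (θ*Complex.I) - w ≠ 0 := by
    intro w hw θ h
    rw [sub_eq_zero] at h
    rw [← h] at hw
    simp [mem_sphere_zero_iff_norm.mp (hsph θ)] at hw
  have hnet : ∀ (n:ℕ) (θ:ℝ), Complex.exp (θ*Complex.I) - ((t n:ℝ):ℂ) ≠ 0 := fun n θ =>
    hne _ (mem_ball_zero_iff.mp (hmemball n)) θ
  -- Cauchy formulas
  have hcau : ∀ n, (∫ θ in (0:ℝ)..(2*π), Complex.exp (θ*Complex.I) *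
      F (Complex.exp (θ*Complex.I)) / (Complex.exp (θ*Complex.I) - ((t n:ℝ):ℂ)))
      = 2*(π:ℂ)*F ((t n:ℝ):ℂ) := fun n => cauchy_interval hDC (hmemball n)
  have hmean : (∫ θ in (0:ℝ)..(2*π), F (Complex.exp (θ*Complex.I))) = 2*(π:ℂ)*F 0 := by
    have h := cauchy_interval hDC (mem_ball_self (by norm_num : (0:ℝ) < 1))
    rw [← h]
    apply intervalIntegral.integral_congr
    intro θ _
    simp only [sub_zero]
    exact (mul_div_cancel_left₀ _ (Complex.exp_ne_zero _)).symm
  -- DCT 1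
  have hA : (∫ θ in (0:ℝ)..(2*π), Complex.exp (θ*Complex.I) *
      F (Complex.exp (θ*Complex.I)) / (Complex.exp (θ*Complex.I) - 1)) = 0 := by
    have hDCT := intervalIntegral.tendsto_integral_filter_of_dominated_convergence
      (μ := MeasureTheory.volume) (a := (0:ℝ)) (b := 2*π) (l := Filter.atTop)
      (F := fun n θ => Complex.exp (θ*Complex.I) * F (Complex.exp (θ*Complex.I)) /
        (Complex.exp (θ*Complex.I) - ((t n:ℝ):ℂ)))
      (f := fun θ => Complex.exp (θ*Complex.I) * F (Complex.exp (θ*Complex.I)) /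
        (Complex.exp (θ*Complex.I) - 1)) bound
      (Filter.Eventually.of_forall (fun n =>
        (((hexpc.mul hFexp).div (hexpc.sub continuous_const) (hnet n)).aestronglyMeasurable).restrict))
      (Filter.Eventually.of_forall (fun n => MeasureTheory.ae_of_all _ (fun θ hθ => by
        have hθ' : θ ∈ Set.Ioc (0:ℝ) (2*π) := by
          rwa [Set.uIoc_of_le (by positivity)] at hθ
        show ‖Complex.exp (θ*Complex.I) * F (Complex.exp (θ*Complex.I)) /
          (Complex.exp (θ*Complex.I) - ((t n:ℝ):ℂ))‖ ≤ bound θ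
        rw [mul_div_assoc, norm_mul, mem_sphere_zero_iff_norm.mp (hsph θ), one_mul]
        exact hkey (t n) (ht2 n) (ht1 n).le θ hθ')))
      hbint
      (MeasureTheory.ae_of_all _ (fun θ hθ => by
        show Filter.Tendsto (fun n => Complex.exp (θ*Complex.I) * F (Complex.exp (θ*Complex.I)) /
          (Complex.exp (θ*Complex.I) - ((t n:ℝ):ℂ))) Filter.atTop _
        by_cases hσ1 : Complex.exp (θ*Complex.I) = 1
        · simp only [hσ1, hF1, mul_zero, zero_div]
          exact tendsto_const_nhds
        · exact Filter.Tendsto.div tendsto_const_nhds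
            (tendsto_const_nhds.sub htC) (sub_ne_zero.mpr hσ1)))
    simp only [hcau] at hDCT
    have h2 : Filter.Tendsto (fun n => 2*(π:ℂ)*F ((t n:ℝ):ℂ)) Filter.atTop (nhds 0) := by
      simpa using tendsto_const_nhds.mul hFt
    exact (tendsto_nhds_unique hDCT h2)
  -- DCT 2
  have hGint : ∀ n, IntervalIntegrable (fun θ:ℝ => Complex.exp (θ*Complex.I) *
      F (Complex.exp (θ*Complex.I)) / (Complex.exp (θ*Complex.I) - ((t n:ℝ):ℂ)))
      MeasureTheory.volume 0 (2*π) := fun n =>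
    ((hexpc.mul hFexp).div (hexpc.sub continuous_const) (hnet n)).intervalIntegrable 0 (2*π)
  have hFint : IntervalIntegrable (fun θ:ℝ => F (Complex.exp (θ*Complex.I)))
      MeasureTheory.volume 0 (2*π) := hFexp.intervalIntegrable 0 (2*π)
  have hsplit : ∀ n, (∫ θ in (0:ℝ)..(2*π), F (Complex.exp (θ*Complex.I)) /
      (Complex.exp (θ*Complex.I) - ((t n:ℝ):ℂ)))
      = (1/((t n:ℝ):ℂ)) * (2*(π:ℂ)*F ((t n:ℝ):ℂ) - 2*(π:ℂ)*F 0) := by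
    intro n
    have htne : ((t n:ℝ):ℂ) ≠ 0 := by
      simpa using (ht0 n).ne'
    have hid : ∀ θ:ℝ, F (Complex.exp (θ*Complex.I)) / (Complex.exp (θ*Complex.I) - ((t n:ℝ):ℂ))
        = (1/((t n:ℝ):ℂ)) * (Complex.exp (θ*Complex.I) * F (Complex.exp (θ*Complex.I)) /
          (Complex.exp (θ*Complex.I) - ((t n:ℝ):ℂ)) - F (Complex.exp (θ*Complex.I))) := by
      intro θ
      field_simp [hnet n θ]
      ring
    rw [intervalIntegral.integral_congr (fun θ _ => hid θ),
      intervalIntegral.integral_const_mul, intervalIntegral.integral_sub (hGint n) hFint,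
      hcau n, hmean]
  have hB : (∫ θ in (0:ℝ)..(2*π), F (Complex.exp (θ*Complex.I)) /
      (Complex.exp (θ*Complex.I) - 1)) = -(2*(π:ℂ))*F 0 := by
    have hDCT := intervalIntegral.tendsto_integral_filter_of_dominated_convergence
      (μ := MeasureTheory.volume) (a := (0:ℝ)) (b := 2*π) (l := Filter.atTop)
      (F := fun n θ => F (Complex.exp (θ*Complex.I)) /
        (Complex.exp (θ*Complex.I) - ((t n:ℝ):ℂ)))
      (f := fun θ => F (Complex.exp (θ*Complex.I)) / (Complex.exp (θ*Complex.I) - 1)) bound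
      (Filter.Eventually.of_forall (fun n =>
        ((hFexp.div (hexpc.sub continuous_const) (hnet n)).aestronglyMeasurable).restrict))
      (Filter.Eventually.of_forall (fun n => MeasureTheory.ae_of_all _ (fun θ hθ => by
        have hθ' : θ ∈ Set.Ioc (0:ℝ) (2*π) := by
          rwa [Set.uIoc_of_le (by positivity)] at hθ
        exact hkey (t n) (ht2 n) (ht1 n).le θ hθ')))
      hbint
      (MeasureTheory.ae_of_all _ (fun θ hθ => by
        show Filter.Tendsto (fun n => F (Complex.exp (θ*Complex.I)) /
          (Complex.exp (θ*Complex.I) - ((t n:ℝ):ℂ))) Filter.atTop _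
        by_cases hσ1 : Complex.exp (θ*Complex.I) = 1
        · simp only [hσ1, hF1, zero_div]
          exact tendsto_const_nhds
        · exact Filter.Tendsto.div tendsto_const_nhds
            (tendsto_const_nhds.sub htC) (sub_ne_zero.mpr hσ1)))
    simp only [hsplit] at hDCT
    have h2 : Filter.Tendsto (fun n => (1/((t n:ℝ):ℂ)) * (2*(π:ℂ)*F ((t n:ℝ):ℂ) - 2*(π:ℂ)*F 0))
        Filter.atTop (nhds (-(2*(π:ℂ))*F 0)) := by
      have ha : Filter.Tendsto (fun n => (1:ℂ)/((t n:ℝ):ℂ)) Filter.atTop (nhds 1) := by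
        have h0 := htC.inv₀ one_ne_zero
        simpa [one_div] using h0
      have hb : Filter.Tendsto (fun n => 2*(π:ℂ)*F ((t n:ℝ):ℂ) - 2*(π:ℂ)*F 0)
          Filter.atTop (nhds (2*(π:ℂ)*0 - 2*(π:ℂ)*F 0)) :=
        (tendsto_const_nhds.mul hFt).sub tendsto_const_nhds
      have hab := ha.mul hb
      convert hab using 2
      ring
    exact tendsto_nhds_unique hDCT h2
  -- conjugate integral
  have hconjid : ∀ θ:ℝ, (starRingEnd ℂ) (F (Complex.exp (θ*Complex.I))) /
      (Complex.exp (θ*Complex.I) - 1)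
      = (starRingEnd ℂ) (-(Complex.exp (θ*Complex.I) * F (Complex.exp (θ*Complex.I)) /
        (Complex.exp (θ*Complex.I) - 1))) := by
    intro θ
    set σ := Complex.exp (θ*Complex.I) with hσdef
    have hσ0 : σ ≠ 0 := Complex.exp_ne_zero _
    have hconjσ : (starRingEnd ℂ) σ = σ⁻¹ := by
      rw [hσdef, ← Complex.exp_conj, map_mul, Complex.conj_ofReal, Complex.conj_I,
        show (θ:ℂ) * -Complex.I = -((θ:ℂ)*Complex.I) by ring, Complex.exp_neg]
    by_cases h1 : σ = 1
    · simp [h1]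
    · have hne1 : σ - 1 ≠ 0 := sub_ne_zero.mpr h1
      have hstep : σ⁻¹ - 1 = -(σ-1)/σ := by
        field_simp
        ring
      rw [map_neg, map_div₀, map_mul, map_sub, map_one, hconjσ, hstep]
      rw [div_div_eq_mul_div, div_neg, neg_neg]
      rw [show σ⁻¹ * (starRingEnd ℂ) (F σ) * σ = (starRingEnd ℂ) (F σ) by
        field_simp]
  have hconjint : (∫ θ in (0:ℝ)..(2*π), (starRingEnd ℂ) (F (Complex.exp (θ*Complex.I))) /
      (Complex.exp (θ*Complex.I) - 1)) = 0 := by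
    rw [intervalIntegral.integral_congr (fun θ _ => hconjid θ), _root_.intervalIntegral_conj,
      intervalIntegral.integral_neg, hA, neg_zero, map_zero]
  -- integrability of the two pieces
  have hmeas : MeasureTheory.AEStronglyMeasurable
      (fun θ:ℝ => F (Complex.exp (θ*Complex.I)) / (Complex.exp (θ*Complex.I) - 1))
      (MeasureTheory.volume.restrict (Set.uIoc 0 (2*π))) := by
    have : (fun θ:ℝ => F (Complex.exp (θ*Complex.I)) / (Complex.exp (θ*Complex.I) - 1))
        = fun θ:ℝ => F (Complex.exp (θ*Complex.I)) * (Complex.exp (θ*Complex.I) - 1)⁻¹ := by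
      funext θ; rw [div_eq_mul_inv]
    rw [this]
    exact ((hFexp.measurable.mul
      ((hexpc.sub continuous_const).measurable.inv)).aestronglyMeasurable).restrict
  have hbound_ae : ∀ᵐ (θ:ℝ) ∂(MeasureTheory.volume.restrict (Set.uIoc (0:ℝ) (2*π))),
      ∀ t':ℝ, 1/2 ≤ t' → t' ≤ 1 →
      ‖F (Complex.exp (θ*Complex.I)) / (Complex.exp (θ*Complex.I) - (t':ℂ))‖ ≤ ‖bound θ‖ := by
    refine (MeasureTheory.ae_restrict_mem measurableSet_uIoc).mono (fun θ hθ t' h1 h2 => ?_)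
    have hθ' : θ ∈ Set.Ioc (0:ℝ) (2*π) := by
      rwa [Set.uIoc_of_le (by positivity)] at hθ
    exact le_trans (hkey t' h1 h2 θ hθ') (le_abs_self _)
  have hu_int : IntervalIntegrable
      (fun θ:ℝ => F (Complex.exp (θ*Complex.I)) / (Complex.exp (θ*Complex.I) - 1))
      MeasureTheory.volume 0 (2*π) := by
    apply IntervalIntegrable.mono_fun hbint hmeas
    refine hbound_ae.mono (fun θ h => ?_)
    show ‖F (Complex.exp (θ*Complex.I)) / (Complex.exp (θ*Complex.I) - 1)‖ ≤ ‖bound θ‖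
    have h1 := h 1 (by norm_num) le_rfl
    simpa using h1
  have hv_int : IntervalIntegrable
      (fun θ:ℝ => (starRingEnd ℂ) (F (Complex.exp (θ*Complex.I))) /
        (Complex.exp (θ*Complex.I) - 1)) MeasureTheory.volume 0 (2*π) := by
    apply IntervalIntegrable.mono_fun hbint
    · have : (fun θ:ℝ => (starRingEnd ℂ) (F (Complex.exp (θ*Complex.I))) /
          (Complex.exp (θ*Complex.I) - 1))
          = fun θ:ℝ => (starRingEnd ℂ) (F (Complex.exp (θ*Complex.I))) *
            (Complex.exp (θ*Complex.I) - 1)⁻¹ := by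
        funext θ; rw [div_eq_mul_inv]
      rw [this]
      exact (((Complex.continuous_conj.comp hFexp).measurable.mul
        ((hexpc.sub continuous_const).measurable.inv)).aestronglyMeasurable).restrict
    · refine hbound_ae.mono (fun θ h => ?_)
      show ‖(starRingEnd ℂ) (F (Complex.exp (θ*Complex.I))) /
        (Complex.exp (θ*Complex.I) - 1)‖ ≤ ‖bound θ‖
      have h1 := h 1 (by norm_num) le_rfl
      rw [norm_div, RCLike.norm_conj, ← norm_div]
      simpa using h1
  -- the f-integral
  have hfrel : ∀ θ:ℝ, (f (Complex.exp (θ*Complex.I)) : ℂ) / (Complex.exp (θ*Complex.I) - 1)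
      = (1/2:ℂ) * (F (Complex.exp (θ*Complex.I)) / (Complex.exp (θ*Complex.I) - 1) +
        (starRingEnd ℂ) (F (Complex.exp (θ*Complex.I))) / (Complex.exp (θ*Complex.I) - 1)) := by
    intro θ
    have hfr : (f (Complex.exp (θ*Complex.I)) : ℂ) =
        (F (Complex.exp (θ*Complex.I)) + (starRingEnd ℂ) (F (Complex.exp (θ*Complex.I)))) / 2 := by
      rw [hFb _ (hsph θ)]
      simp only [map_add, map_mul, Complex.conj_ofReal, Complex.conj_I]
      ring
    rw [hfr]
    simp only [div_eq_mul_inv]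
    ring
  have hRHS : (∫ θ in (0:ℝ)..(2*π), (f (Complex.exp (θ*Complex.I)):ℂ) /
      (Complex.exp (θ*Complex.I) - 1)) = -(π:ℂ) * F 0 := by
    rw [intervalIntegral.integral_congr (fun θ _ => hfrel θ),
      intervalIntegral.integral_const_mul, intervalIntegral.integral_add hu_int hv_int,
      hB, hconjint]
    ring
  have hLHS : (∫ θ in (0:ℝ)..(2*π), ((f (Complex.exp (θ*Complex.I)):ℂ) +
      Complex.I * (g (Complex.exp (θ*Complex.I)):ℂ))) = 2*(π:ℂ)*F 0 := by
    rw [← hmean]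
    exact intervalIntegral.integral_congr (fun θ _ => (hFb _ (hsph θ)).symm)
  rw [hLHS, hRHS]
  have hπC : ((π:ℝ):ℂ) ≠ 0 := by
    simpa using Real.pi_ne_zero
  field_simp
  try ring
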